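/- arXiv:1312.4895 — 3 statements merged into one kernel-verified Lean document; each statement's English description precedes it below -/
import Mathlib

section
/- (Exact recovery by Basis Pursuit.) Let A ∈ ℝ^{m×n} satisfy the restricted isometry property of order 2κ with constant δ_{2κ} < √2 − 1, and let x ∈ ℝ^n be κ-sparse. Then x is the unique minimizer of ‖z‖₁ over the set {z ∈ ℝ^n : Az = Ax}. -/
open Finset

def IsSparse {n : ℕ} (κ : ℕ) (x : Fin n → ℝ) : Prop :=
  (Finset.univ.filter fun j => x j ≠ 0).card ≤ κ

noncomputable def norm1 {d : ℕ} (v : Fin d → ℝ) : ℝ := ∑ i, |v i|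

/-!
Let `h` lie in the kernel of `A` and `#S ≤ κ`. Order the entries of `h` off `S` by decreasing
modulus and cut them into consecutive blocks `T₀, T₁, …` of `κ` indices. Every entry of `T_{j+1}`
is at most the mean modulus on `T_j`, so `√κ ‖h_{T_{j+1}}‖₂ ≤ ‖h_{T_j}‖₁`. RIP of order `2κ`
makes `A` nearly preserve the orthogonality of disjointly supported `κ`-sparse vectors,
`|⟪A u, A v⟫| ≤ δ ‖u‖ ‖v‖`. Since `A (h_S + h_{T₀}) = -∑_{j ≥ 1} A h_{T_j}`, these give
`√κ (1 - δ) ‖h_S + h_{T₀}‖₂ ≤ √2 δ ‖h_{Sᶜ}‖₁`, hence the null space property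
`‖h_S‖₁ ≤ ρ ‖h_{Sᶜ}‖₁` with `ρ = √2 δ / (1 - δ)`, and `ρ < 1` exactly when `δ < √2 - 1`.
For `x` supported on `S` the triangle inequality then gives
`‖x + h‖₁ ≥ ‖x‖₁ + (1 - ρ) ‖h_{Sᶜ}‖₁`.
-/

open scoped InnerProductSpace

theorem Finset.exists_largest_subset_card_eq {ι α : Type*} [DecidableEq ι] [LinearOrder α]
    (g : ι → α) {s : Finset ι} {k : ℕ} (hk : k ≤ #s) :
    ∃ t ⊆ s, #t = k ∧ ∀ a ∈ s \ t, ∀ b ∈ t, g a ≤ g b := by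
  induction k with
  | zero => exact ⟨∅, empty_subset _, card_empty, by simp⟩
  | succ k ih =>
    obtain ⟨t, hts, htk, hlarge⟩ := ih (by omega)
    have hne : (s \ t).Nonempty := by
      rw [← card_pos, card_sdiff_of_subset hts]
      omega
    obtain ⟨c, hc, hcmax⟩ := exists_max_image (s \ t) g hne
    refine ⟨insert c t, insert_subset (mem_sdiff.1 hc).1 hts, ?_, ?_⟩
    · rw [card_insert_of_notMem (mem_sdiff.1 hc).2, htk]
    · intro a ha b hb
      rw [sdiff_insert] at ha
      rcases mem_insert.1 hb with rfl | hb
      · exact hcmax a (mem_of_mem_erase ha)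
      · exact hlarge a (mem_of_mem_erase ha) b hb

theorem norm_add_le_sqrt_two_mul_norm_add {F : Type*} [NormedAddCommGroup F]
    [InnerProductSpace ℝ F] {u v : F} (huv : ⟪u, v⟫_ℝ = 0) :
    ‖u‖ + ‖v‖ ≤ √2 * ‖u + v‖ := by
  have hpyth := norm_add_sq_eq_norm_sq_add_norm_sq_real huv
  rw [← Real.sqrt_sq (add_nonneg (norm_nonneg u) (norm_nonneg v)),
    ← Real.sqrt_sq (norm_nonneg (u + v)), ← Real.sqrt_mul zero_le_two]
  exact Real.sqrt_le_sqrt (by nlinarith [sq_nonneg (‖u‖ - ‖v‖)])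

namespace CompressedSensing

variable {ι : Type*} [DecidableEq ι]

noncomputable def restrict (T : Finset ι) (x : EuclideanSpace ℝ ι) : EuclideanSpace ℝ ι :=
  WithLp.toLp 2 fun i => if i ∈ T then x i else 0

@[simp]
theorem restrict_apply (T : Finset ι) (x : EuclideanSpace ℝ ι) (i : ι) :
    restrict T x i = if i ∈ T then x i else 0 :=
  rfl

theorem restrict_apply_of_notMem (T : Finset ι) (x : EuclideanSpace ℝ ι) :
    ∀ i ∉ T, restrict T x i = 0 :=
  fun _ hi => if_neg hi

theorem restrict_add_restrict_sdiff {T U : Finset ι} (hTU : T ⊆ U) (x : EuclideanSpace ℝ ι) :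
    restrict T x + restrict (U \ T) x = restrict U x := by
  ext i
  have := @hTU i
  by_cases hT : i ∈ T <;> by_cases hU : i ∈ U <;> simp_all

theorem exists_subset_card_eq_min_forall_mul_le (g : ι → ℝ) (s : Finset ι) (κ : ℕ) :
    ∃ t ⊆ s, #t = min κ #s ∧ ∀ a ∈ s \ t, κ * g a ≤ ∑ b ∈ t, g b := by
  obtain ⟨t, hts, htcard, hlarge⟩ := exists_largest_subset_card_eq g (min_le_right κ #s)
  refine ⟨t, hts, htcard, fun a ha => ?_⟩
  have htκ : #t = κ := by
    have := card_pos.2 ⟨a, ha⟩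
    rw [card_sdiff_of_subset hts] at this
    omega
  simpa [htκ] using card_nsmul_le_sum t g (g a) (hlarge a ha)

variable [Fintype ι]

theorem restrict_add_restrict_compl (S : Finset ι) (x : EuclideanSpace ℝ ι) :
    restrict S x + restrict Sᶜ x = x := by
  ext i
  by_cases hS : i ∈ S <;> simp [hS]

theorem norm_restrict_sq (T : Finset ι) (x : EuclideanSpace ℝ ι) :
    ‖restrict T x‖ ^ 2 = ∑ i ∈ T, x i ^ 2 := by
  simp [EuclideanSpace.real_norm_sq_eq, apply_ite (· ^ 2), sum_ite_mem]

theorem inner_eq_zero_of_disjoint {T T' : Finset ι} (hTT' : Disjoint T T')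
    {u v : EuclideanSpace ℝ ι} (hu : ∀ i ∉ T, u i = 0) (hv : ∀ i ∉ T', v i = 0) :
    ⟪u, v⟫_ℝ = 0 := by
  rw [PiLp.inner_apply]
  refine sum_eq_zero fun i _ => ?_
  by_cases hi : i ∈ T
  · simp [hv i (disjoint_left.1 hTT' hi)]
  · simp [hu i hi]

theorem sum_abs_le_sqrt_card_mul_norm_restrict (S : Finset ι) (x : EuclideanSpace ℝ ι) :
    ∑ i ∈ S, |x i| ≤ √(#S : ℝ) * ‖restrict S x‖ := by
  rw [← Real.sqrt_sq (norm_nonneg _), ← Real.sqrt_mul (Nat.cast_nonneg _), norm_restrict_sq,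
    ← Real.sqrt_sq (sum_nonneg fun i _ => abs_nonneg (x i))]
  refine Real.sqrt_le_sqrt ?_
  simpa only [sq_abs] using sq_sum_le_card_mul_sum_sq (s := S) (f := fun i => |x i|)

theorem sqrt_mul_norm_restrict_le {κ : ℕ} (hκ : 0 < κ) {R : Finset ι} (hR : #R ≤ κ)
    (h : EuclideanSpace ℝ ι) {t : ℝ} (ht0 : 0 ≤ t) (ht : ∀ a ∈ R, κ * |h a| ≤ t) :
    √κ * ‖restrict R h‖ ≤ t := by
  have hsq : (κ : ℝ) * (κ * ∑ i ∈ R, h i ^ 2) ≤ κ * t ^ 2 :=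
    calc (κ : ℝ) * (κ * ∑ i ∈ R, h i ^ 2) = ∑ i ∈ R, (κ * |h i|) ^ 2 := by
          rw [mul_sum, mul_sum]
          exact sum_congr rfl fun i _ => by rw [mul_pow, sq_abs]; ring
      _ ≤ ∑ _i ∈ R, t ^ 2 := sum_le_sum fun i hi => pow_le_pow_left₀ (by positivity) (ht i hi) 2
      _ = #R * t ^ 2 := by rw [sum_const, nsmul_eq_mul]
      _ ≤ κ * t ^ 2 := by gcongr
  rw [← pow_le_pow_iff_left₀ (by positivity) ht0 two_ne_zero, mul_pow,
    Real.sq_sqrt (Nat.cast_nonneg _), norm_restrict_sq]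
  exact le_of_mul_le_mul_left hsq (by exact_mod_cast hκ)

variable {F : Type*} [NormedAddCommGroup F] [InnerProductSpace ℝ F]

def IsRIP (A : EuclideanSpace ℝ ι →ₗ[ℝ] F) (s : ℕ) (δ : ℝ) : Prop :=
  ∀ T : Finset ι, #T ≤ s → ∀ x : EuclideanSpace ℝ ι, (∀ i ∉ T, x i = 0) →
    (1 - δ) * ‖x‖ ^ 2 ≤ ‖A x‖ ^ 2 ∧ ‖A x‖ ^ 2 ≤ (1 + δ) * ‖x‖ ^ 2

def HasNullSpaceProperty (A : EuclideanSpace ℝ ι →ₗ[ℝ] F) (κ : ℕ) (ρ : ℝ) : Prop :=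
  ∀ h, A h = 0 → ∀ S : Finset ι, #S ≤ κ → ∑ i ∈ S, |h i| ≤ ρ * ∑ i ∈ Sᶜ, |h i|

namespace IsRIP

variable {A : EuclideanSpace ℝ ι →ₗ[ℝ] F} {s κ : ℕ} {δ : ℝ}

theorem abs_inner_le_of_norm_eq_one (hA : IsRIP A s δ) {T T' : Finset ι} (hTT' : Disjoint T T')
    (hcard : #T + #T' ≤ s) {u v : EuclideanSpace ℝ ι} (hu : ∀ i ∉ T, u i = 0)
    (hv : ∀ i ∉ T', v i = 0) (hu1 : ‖u‖ = 1) (hv1 : ‖v‖ = 1) :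
    |⟪A u, A v⟫_ℝ| ≤ δ := by
  have huv := inner_eq_zero_of_disjoint hTT' hu hv
  have hunion : #(T ∪ T') ≤ s := (card_union_le T T').trans hcard
  have hoff : ∀ i ∉ T ∪ T', u i = 0 ∧ v i = 0 := fun i hi => by
    rw [mem_union, not_or] at hi
    exact ⟨hu i hi.1, hv i hi.2⟩
  obtain ⟨hadd₁, hadd₂⟩ := hA _ hunion (u + v) fun i hi => by simp [hoff i hi]
  obtain ⟨hsub₁, hsub₂⟩ := hA _ hunion (u - v) fun i hi => by simp [hoff i hi]
  simp only [map_add, map_sub, norm_add_sq_real, norm_sub_sq_real, huv, hu1, hv1] at *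
  rw [abs_le]
  constructor <;> linarith

theorem abs_inner_le (hA : IsRIP A s δ) {T T' : Finset ι} (hTT' : Disjoint T T')
    (hcard : #T + #T' ≤ s) {u v : EuclideanSpace ℝ ι} (hu : ∀ i ∉ T, u i = 0)
    (hv : ∀ i ∉ T', v i = 0) :
    |⟪A u, A v⟫_ℝ| ≤ δ * ‖u‖ * ‖v‖ := by
  rcases eq_or_ne u 0 with rfl | hu0
  · simp
  rcases eq_or_ne v 0 with rfl | hv0
  · simp
  have hunit := hA.abs_inner_le_of_norm_eq_one hTT' hcard (u := ‖u‖⁻¹ • u) (v := ‖v‖⁻¹ • v)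
    (fun i hi => by simp [hu i hi]) (fun i hi => by simp [hv i hi])
    (norm_smul_inv_norm hu0) (norm_smul_inv_norm hv0)
  rw [map_smul, map_smul, real_inner_smul_left, real_inner_smul_right, abs_mul, abs_mul,
    abs_inv, abs_inv, abs_norm, abs_norm, inv_mul_le_iff₀ (norm_pos_iff.2 hu0),
    inv_mul_le_iff₀ (norm_pos_iff.2 hv0)] at hunit
  linarith

theorem sqrt_mul_abs_inner_restrict_le (hA : IsRIP A (2 * κ) δ) (hδ0 : 0 ≤ δ) (hκ : 0 < κ)
    {T : Finset ι} (hT : #T ≤ κ) {u : EuclideanSpace ℝ ι} (hu : ∀ i ∉ T, u i = 0)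
    (h : EuclideanSpace ℝ ι) (R : Finset ι) (hTR : Disjoint T R) (t : ℝ) (ht0 : 0 ≤ t)
    (ht : ∀ a ∈ R, κ * |h a| ≤ t) :
    √κ * |⟪A u, A (restrict R h)⟫_ℝ| ≤ δ * ‖u‖ * (t + ∑ i ∈ R, |h i|) := by
  -- The blocks are peeled off one at a time: `t` is the ℓ¹ mass of the block preceding `R`.
  induction R using Finset.strongInduction generalizing t with
  | H R ih =>
  have hδu : 0 ≤ δ * ‖u‖ := mul_nonneg hδ0 (norm_nonneg u)
  rcases R.eq_empty_or_nonempty with rfl | hRne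
  · have : restrict ∅ h = 0 := by ext; simp
    simpa [this] using mul_nonneg hδu ht0
  obtain ⟨T', hT'R, hT'card, hT'large⟩ := exists_subset_card_eq_min_forall_mul_le (|h ·|) R κ
  have hT' : #T' ≤ κ := hT'card ▸ min_le_left _ _
  have hT'ne : T'.Nonempty := by rw [← card_pos, hT'card]; exact lt_min hκ (card_pos.2 hRne)
  have hhead : √κ * |⟪A u, A (restrict T' h)⟫_ℝ| ≤ δ * ‖u‖ * t :=
    calc √κ * |⟪A u, A (restrict T' h)⟫_ℝ| ≤ √κ * (δ * ‖u‖ * ‖restrict T' h‖) := by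
          gcongr
          exact hA.abs_inner_le (disjoint_of_subset_right hT'R hTR) (by omega) hu
            (restrict_apply_of_notMem T' h)
      _ = δ * ‖u‖ * (√κ * ‖restrict T' h‖) := by ring
      _ ≤ δ * ‖u‖ * t := mul_le_mul_of_nonneg_left
          (sqrt_mul_norm_restrict_le hκ hT' h ht0 fun a ha => ht a (hT'R ha)) hδu
  have htail := ih (R \ T') (sdiff_ssubset hT'R hT'ne) (disjoint_of_subset_right sdiff_subset hTR)
    (∑ i ∈ T', |h i|) (sum_nonneg fun i _ => abs_nonneg _) hT'large
  calc √κ * |⟪A u, A (restrict R h)⟫_ℝ|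
      ≤ √κ * |⟪A u, A (restrict T' h)⟫_ℝ| + √κ * |⟪A u, A (restrict (R \ T') h)⟫_ℝ| := by
        rw [← restrict_add_restrict_sdiff hT'R, map_add, inner_add_right, ← mul_add]
        gcongr
        exact abs_add_le _ _
    _ ≤ δ * ‖u‖ * t + δ * ‖u‖ * (∑ i ∈ T', |h i| + ∑ i ∈ R \ T', |h i|) := add_le_add hhead htail
    _ = δ * ‖u‖ * (t + ∑ i ∈ R, |h i|) := by rw [← sum_sdiff hT'R]; ring

theorem exists_sqrt_mul_norm_map_sq_le (hA : IsRIP A (2 * κ) δ) (hδ0 : 0 ≤ δ) (hκ : 0 < κ)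
    {h : EuclideanSpace ℝ ι} (hh : A h = 0) {S : Finset ι} (hS : #S ≤ κ) :
    ∃ T₀, Disjoint S T₀ ∧ #T₀ ≤ κ ∧
      √κ * ‖A (restrict S h + restrict T₀ h)‖ ^ 2 ≤
        √2 * δ * ‖restrict S h + restrict T₀ h‖ * ∑ i ∈ Sᶜ, |h i| := by
  obtain ⟨T₀, hT₀S, hT₀card, hlarge⟩ := exists_subset_card_eq_min_forall_mul_le (|h ·|) Sᶜ κ
  have hT₀ : #T₀ ≤ κ := hT₀card ▸ min_le_left _ _
  have hdisj : Disjoint S T₀ := disjoint_of_subset_right hT₀S disjoint_compl_right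
  refine ⟨T₀, hdisj, hT₀, ?_⟩
  set R := Sᶜ \ T₀
  set W := restrict S h + restrict T₀ h
  set σ := ∑ i ∈ Sᶜ, |h i|
  have hAW : A W = -A (restrict R h) := by
    rw [eq_neg_iff_add_eq_zero, ← map_add, add_assoc, restrict_add_restrict_sdiff hT₀S,
      restrict_add_restrict_compl, hh]
  have htail : ∀ {T : Finset ι}, #T ≤ κ → Disjoint T R →
      √κ * |⟪A (restrict T h), A (restrict R h)⟫_ℝ| ≤ δ * ‖restrict T h‖ * σ := fun hT hTR => by
    simpa only [R, sum_sdiff hT₀S, σ, add_comm (∑ i ∈ T₀, |h i|)] using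
      hA.sqrt_mul_abs_inner_restrict_le hδ0 hκ hT (restrict_apply_of_notMem _ h) h R hTR _
        (sum_nonneg fun i _ => abs_nonneg _) hlarge
  calc √κ * ‖A W‖ ^ 2
      = -(√κ * ⟪A (restrict S h), A (restrict R h)⟫_ℝ
        + √κ * ⟪A (restrict T₀ h), A (restrict R h)⟫_ℝ) := by
        rw [← real_inner_self_eq_norm_sq]
        nth_rewrite 2 [hAW]
        rw [inner_neg_right, map_add, inner_add_left]
        ring
    _ ≤ √κ * |⟪A (restrict S h), A (restrict R h)⟫_ℝ|
        + √κ * |⟪A (restrict T₀ h), A (restrict R h)⟫_ℝ| := by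
        rw [neg_add, ← mul_neg, ← mul_neg]
        gcongr <;> exact neg_le_abs _
    _ ≤ δ * (‖restrict S h‖ + ‖restrict T₀ h‖) * σ := by
        rw [mul_add, add_mul]
        exact add_le_add (htail hS (disjoint_of_subset_right sdiff_subset disjoint_compl_right))
          (htail hT₀ disjoint_sdiff)
    _ ≤ δ * (√2 * ‖W‖) * σ := by
        gcongr
        exact norm_add_le_sqrt_two_mul_norm_add (inner_eq_zero_of_disjoint hdisj
          (restrict_apply_of_notMem S h) (restrict_apply_of_notMem T₀ h))
    _ = √2 * δ * ‖W‖ * σ := by ring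

theorem hasNullSpaceProperty (hA : IsRIP A (2 * κ) δ) (hδ0 : 0 ≤ δ) (hδ1 : δ < 1) :
    HasNullSpaceProperty A κ (√2 * δ / (1 - δ)) := by
  intro h hh S hS
  have h1δ : 0 < 1 - δ := sub_pos.2 hδ1
  have hσ : 0 ≤ ∑ i ∈ Sᶜ, |h i| := sum_nonneg fun i _ => abs_nonneg _
  rcases κ.eq_zero_or_pos with rfl | hκ
  · simpa [card_eq_zero.1 (Nat.le_zero.1 hS)] using
      mul_nonneg (div_nonneg (by positivity) h1δ.le) hσ
  obtain ⟨T₀, hdisj, hT₀, hupper⟩ := hA.exists_sqrt_mul_norm_map_sq_le hδ0 hκ hh hS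
  set W := restrict S h + restrict T₀ h
  have hlower : (1 - δ) * ‖W‖ ^ 2 ≤ ‖A W‖ ^ 2 := by
    refine (hA (S ∪ T₀) ((card_union_le _ _).trans (by omega)) W fun i hi => ?_).1
    rw [mem_union, not_or] at hi
    simp [W, hi.1, hi.2]
  have hS_W : ‖restrict S h‖ ≤ ‖W‖ := by
    have := norm_add_sq_eq_norm_sq_add_norm_sq_real (inner_eq_zero_of_disjoint hdisj
      (restrict_apply_of_notMem S h) (restrict_apply_of_notMem T₀ h))
    nlinarith [norm_nonneg (restrict S h), norm_nonneg W]
  have hl1 : ∑ i ∈ S, |h i| ≤ √κ * ‖W‖ :=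
    (sum_abs_le_sqrt_card_mul_norm_restrict S h).trans <|
      mul_le_mul (Real.sqrt_le_sqrt (by exact_mod_cast hS)) hS_W (norm_nonneg _) (by positivity)
  rw [div_mul_eq_mul_div, le_div_iff₀ h1δ]
  rcases (norm_nonneg W).eq_or_lt with hW0 | hW0
  · rw [← hW0, mul_zero] at hl1
    nlinarith [mul_nonneg (Real.sqrt_nonneg 2) hδ0]
  · refine le_of_mul_le_mul_right ?_ hW0
    calc (∑ i ∈ S, |h i|) * (1 - δ) * ‖W‖ ≤ √κ * ‖W‖ * (1 - δ) * ‖W‖ := by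
          gcongr
      _ = √κ * ((1 - δ) * ‖W‖ ^ 2) := by ring
      _ ≤ √κ * ‖A W‖ ^ 2 := by gcongr
      _ ≤ √2 * δ * (∑ i ∈ Sᶜ, |h i|) * ‖W‖ := by linarith

end IsRIP

theorem sum_abs_add_one_sub_mul_le_sum_abs_add {x h : ι → ℝ} {S : Finset ι} {ρ : ℝ}
    (hx : ∀ i ∉ S, x i = 0) (hh : ∑ i ∈ S, |h i| ≤ ρ * ∑ i ∈ Sᶜ, |h i|) :
    ∑ i, |x i| + (1 - ρ) * ∑ i ∈ Sᶜ, |h i| ≤ ∑ i, |x i + h i| := by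
  have hxS : ∑ i, |x i| = ∑ i ∈ S, |x i| := by
    rw [← sum_add_sum_compl S, add_eq_left]
    exact sum_eq_zero fun i hi => by rw [hx i (mem_compl.1 hi), abs_zero]
  have hxhS : ∑ i, |x i + h i| = ∑ i ∈ S, |x i + h i| + ∑ i ∈ Sᶜ, |h i| := by
    rw [← sum_add_sum_compl S]
    congr 1
    exact sum_congr rfl fun i hi => by rw [hx i (mem_compl.1 hi), zero_add]
  have htri : ∑ i ∈ S, |x i| ≤ ∑ i ∈ S, |x i + h i| + ∑ i ∈ S, |h i| := by
    rw [← sum_add_distrib]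
    exact sum_le_sum fun i _ => by simpa using abs_sub (x i + h i) (h i)
  linarith

theorem sum_abs_le_sum_abs_add_and_eq_zero {x h : ι → ℝ} {S : Finset ι} {ρ : ℝ} (hρ : ρ < 1)
    (hx : ∀ i ∉ S, x i = 0) (hh : ∑ i ∈ S, |h i| ≤ ρ * ∑ i ∈ Sᶜ, |h i|) :
    ∑ i, |x i| ≤ ∑ i, |x i + h i| ∧ (∑ i, |x i + h i| = ∑ i, |x i| → h = 0) := by
  have hbound := sum_abs_add_one_sub_mul_le_sum_abs_add hx hh
  have hSc : 0 ≤ ∑ i ∈ Sᶜ, |h i| := sum_nonneg fun i _ => abs_nonneg _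
  refine ⟨by nlinarith, fun heq => ?_⟩
  have hSc0 : ∑ i ∈ Sᶜ, |h i| = 0 := by nlinarith
  have hS0 : ∑ i ∈ S, |h i| = 0 :=
    le_antisymm (by simpa [hSc0] using hh) (sum_nonneg fun i _ => abs_nonneg _)
  have hall : ∑ i, |h i| = 0 := by rw [← sum_add_sum_compl S, hS0, hSc0, add_zero]
  ext i
  exact abs_eq_zero.1 ((sum_eq_zero_iff_of_nonneg fun i _ => abs_nonneg _).1 hall i (mem_univ i))

theorem HasNullSpaceProperty.exact_recovery {A : EuclideanSpace ℝ ι →ₗ[ℝ] F} {κ : ℕ} {ρ : ℝ}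
    (hA : HasNullSpaceProperty A κ ρ) (hρ : ρ < 1) {x : EuclideanSpace ℝ ι}
    (hx : #{i | x i ≠ 0} ≤ κ) {z : EuclideanSpace ℝ ι} (hz : A z = A x) :
    ∑ i, |x i| ≤ ∑ i, |z i| ∧ (∑ i, |z i| = ∑ i, |x i| → z = x) := by
  have hker : A (z - x) = 0 := by rw [map_sub, hz, sub_self]
  have hrec := sum_abs_le_sum_abs_add_and_eq_zero hρ (fun i hi => by simpa using hi)
    (hA _ hker _ hx)
  simp only [WithLp.ofLp_sub, Pi.sub_apply, add_sub_cancel, sub_eq_zero] at hrec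
  exact ⟨hrec.1, fun heq => WithLp.ofLp_injective 2 (hrec.2 heq)⟩

end CompressedSensing

/-- **Exact recovery by Basis Pursuit.**  If `A` satisfies RIP of order `2κ` with
constant `δ < √2 − 1` and `x` is `κ`-sparse, then `x` is the unique minimizer of
`‖z‖₁` over `{z : Az = Ax}`. -/
theorem basis_pursuit_exact_recovery
    {m n κ : ℕ}
    (A : Matrix (Fin m) (Fin n) ℝ) (δ : ℝ) (hδ0 : 0 ≤ δ)
    (hδ : δ < Real.sqrt 2 - 1)
    (hRIP : ∀ z : Fin n → ℝ, IsSparse (2 * κ) z →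
      (1 - δ) * (∑ j, (z j) ^ 2) ≤ (∑ i, (A.mulVec z i) ^ 2) ∧
      (∑ i, (A.mulVec z i) ^ 2) ≤ (1 + δ) * (∑ j, (z j) ^ 2))
    (x : Fin n → ℝ) (hx : IsSparse κ x) :
    (∀ z : Fin n → ℝ, A.mulVec z = A.mulVec x → norm1 x ≤ norm1 z) ∧
    (∀ z : Fin n → ℝ, A.mulVec z = A.mulVec x → norm1 z = norm1 x → z = x) := by
  have hA : CompressedSensing.IsRIP (Matrix.toEuclideanLin A) (2 * κ) δ := fun T hT w hw => by
    have hsparse : IsSparse (2 * κ) (WithLp.ofLp w) := by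
      refine (card_le_card fun i hi => ?_).trans hT
      by_contra hiT
      exact (mem_filter.1 hi).2 (hw i hiT)
    simpa [EuclideanSpace.real_norm_sq_eq] using hRIP _ hsparse
  have hsqrt2 : √2 * √2 = 2 := Real.mul_self_sqrt zero_le_two
  have hδ1 : δ < 1 := by nlinarith [Real.sqrt_nonneg 2]
  have hρ : √2 * δ / (1 - δ) < 1 := by
    rw [div_lt_one (sub_pos.2 hδ1)]
    nlinarith
  have hrecovery := fun z (hz : A.mulVec z = A.mulVec x) =>
    (hA.hasNullSpaceProperty hδ0 hδ1).exact_recovery hρ (x := WithLp.toLp 2 x) hx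
      (z := WithLp.toLp 2 z) (by simp [hz])
  exact ⟨fun z hz => by simpa [norm1] using (hrecovery z hz).1,
    fun z hz => by simpa [norm1] using (hrecovery z hz).2⟩
end

section
/- (Warm-start distance bound.) Let n ≥ 1 and 1 ≤ τ ≤ n. Let x^{(i−1)}, x^{(i)} ∈ ℝ^n be two overlapping windows of a data stream, i.e., x^{(i)}_j = x^{(i−1)}_{j+τ} for j = 0,…,n−1−τ. Let x⋆^{(i−1)}, x⋆^{(i)} ∈ ℝ^n be arbitrary (the optimal LASSO solutions of the two windows), and define the warm start x̂₀ ∈ ℝ^n by x̂₀_j = x⋆^{(i−1)}_{j+τ} for j = 0,…,n−1−τ and x̂₀_j = 0 for j = n−τ,…,n−1. Then ‖x̂₀ − x⋆^{(i)}‖₂ ≤ ‖x⋆^{(i−1)} − x^{(i−1)}‖₂ + ‖x⋆^{(i)} − x^{(i)}‖₂ + ‖(x^{(i)}_{n−τ}, …, x^{(i)}_{n−1})‖₂. Consequently, if each optimization error satisfies the LASSO bound ‖x⋆^{(j)} − x^{(j)}‖₂ ≤ c₀‖x^{(j)} − x^{(j)}_κ‖₁/√κ + c₁σ̃ for j = i−1,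 i, then ‖x̂₀ − x⋆^{(i)}‖₂ ≤ c₀‖x^{(i−1)} − x^{(i−1)}_κ‖₁/√κ + c₀‖x^{(i)} − x^{(i)}_κ‖₁/√κ + 2c₁σ̃ + ‖(x^{(i)}_{n−τ}, …, x^{(i)}_{n−1})‖₂. -/
open Finset

/-- Euclidean norm. -/
noncomputable def norm2 {d : ℕ} (v : Fin d → ℝ) : ℝ := Real.sqrt (∑ i, (v i) ^ 2)

/-!
The new window agrees with the shifted old window except on its last `τ` entries, so
`x̂₀ − x⋆⁽ⁱ⁾` splits as the shifted old error `shift (x⋆⁽ⁱ⁻¹⁾ − x⁽ⁱ⁻¹⁾)`, plus the new error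
`x⁽ⁱ⁾ − x⋆⁽ⁱ⁾`, minus the tail of `x⁽ⁱ⁾`. Shifting with zero padding does not increase the
Euclidean norm, and the triangle inequality gives the bound.
-/

section Norm2

variable {d : ℕ}

theorem norm2_eq_norm (v : Fin d → ℝ) :
    norm2 v = ‖(WithLp.toLp 2 v : EuclideanSpace ℝ (Fin d))‖ := by
  simp [EuclideanSpace.norm_eq, norm2, sq_abs]

theorem norm2_sub_comm (u v : Fin d → ℝ) : norm2 (u - v) = norm2 (v - u) := by
  simp only [norm2_eq_norm, WithLp.toLp_sub, norm_sub_rev]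

theorem norm2_add_sub_le (u v w : Fin d → ℝ) :
    norm2 (u + v - w) ≤ norm2 u + norm2 v + norm2 w := by
  simp only [norm2_eq_norm, WithLp.toLp_add, WithLp.toLp_sub]
  exact (norm_sub_le _ _).trans (by gcongr; exact norm_add_le _ _)

end Norm2

section Window

variable {n : ℕ} (τ : ℕ)

def shiftPad (v : Fin n → ℝ) : Fin n → ℝ :=
  fun j => if h : (j : ℕ) + τ < n then v ⟨(j : ℕ) + τ, h⟩ else 0

def tailPart (v : Fin n → ℝ) : Fin n → ℝ :=
  fun j => if n - τ ≤ (j : ℕ) then v j else 0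

theorem shiftPad_sub (u v : Fin n → ℝ) : shiftPad τ (u - v) = shiftPad τ u - shiftPad τ v := by
  funext j
  by_cases h : (j : ℕ) + τ < n <;> simp [shiftPad, h]

theorem sum_sq_shiftPad_le (v : Fin n → ℝ) : ∑ j, shiftPad τ v j ^ 2 ≤ ∑ j, v j ^ 2 := by
  -- Pass to sums over `range` of the zero-extension of `v ^ 2` to `ℕ`.
  set w : ℕ → ℝ := fun k => if h : k < n then v ⟨k, h⟩ ^ 2 else 0
  have hw_nonneg : ∀ k, 0 ≤ w k := fun k => by dsimp only [w]; split_ifs <;> positivity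
  have hshift : ∑ j, shiftPad τ v j ^ 2 = ∑ j ∈ range n, w (τ + j) := by
    rw [← Fin.sum_univ_eq_sum_range (fun j => w (τ + j))]
    refine sum_congr rfl fun j _ => ?_
    simp only [shiftPad, w, add_comm τ]
    split_ifs <;> simp
  have hv : ∑ j, v j ^ 2 = ∑ k ∈ range n, w k := by
    rw [← Fin.sum_univ_eq_sum_range w]
    simp [w]
  rw [hshift, hv]
  calc ∑ j ∈ range n, w (τ + j)
      ≤ ∑ k ∈ range τ, w k + ∑ j ∈ range n, w (τ + j) :=
        le_add_of_nonneg_left (sum_nonneg fun k _ => hw_nonneg k)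
    _ = ∑ k ∈ range n, w k + ∑ j ∈ range τ, w (n + j) := by
        rw [← sum_range_add, add_comm τ n, sum_range_add]
    _ = ∑ k ∈ range n, w k := by simp [w]

theorem norm2_shiftPad_le (v : Fin n → ℝ) : norm2 (shiftPad τ v) ≤ norm2 v :=
  Real.sqrt_le_sqrt (sum_sq_shiftPad_le τ v)

theorem norm2_tailPart (v : Fin n → ℝ) :
    norm2 (tailPart τ v) =
      Real.sqrt (∑ j ∈ univ.filter fun j : Fin n => n - τ ≤ (j : ℕ), v j ^ 2) := by
  rw [norm2, sum_filter]
  refine congrArg Real.sqrt (sum_congr rfl fun j _ => ?_)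
  unfold tailPart
  split_ifs <;> simp

theorem eq_shiftPad_add_tailPart {u v : Fin n → ℝ}
    (hoverlap : ∀ j : Fin n, ∀ h : (j : ℕ) + τ < n, v j = u ⟨(j : ℕ) + τ, h⟩) :
    v = shiftPad τ u + tailPart τ v := by
  funext j
  simp only [Pi.add_apply, shiftPad, tailPart]
  split_ifs with h h' h'
  · omega
  · simp [hoverlap j h]
  · simp
  · omega

end Window

theorem warm_start_distance_bound_general
    {n : ℕ} (τ : ℕ)
    (xprev xcur : Fin n → ℝ)
    (hoverlap : ∀ j : Fin n, ∀ h : (j : ℕ) + τ < n, xcur j = xprev ⟨(j : ℕ) + τ, h⟩)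
    (xsprev xscur : Fin n → ℝ)
    (x0 : Fin n → ℝ)
    (hx0 : ∀ j : Fin n,
      x0 j = if h : (j : ℕ) + τ < n then xsprev ⟨(j : ℕ) + τ, h⟩ else 0)
    (tail : ℝ)
    (htail : tail =
      Real.sqrt (∑ j ∈ Finset.univ.filter fun j : Fin n => n - τ ≤ (j : ℕ), (xcur j) ^ 2)) :
    norm2 (x0 - xscur) ≤ norm2 (xsprev - xprev) + norm2 (xscur - xcur) + tail ∧
    (∀ (c0 c1 σt : ℝ) (κ : ℕ) (xκprev xκcur : Fin n → ℝ),
      norm2 (xsprev - xprev) ≤ c0 * norm1 (xprev - xκprev) / Real.sqrt κ + c1 * σt →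
      norm2 (xscur - xcur) ≤ c0 * norm1 (xcur - xκcur) / Real.sqrt κ + c1 * σt →
      norm2 (x0 - xscur) ≤
        c0 * norm1 (xprev - xκprev) / Real.sqrt κ +
          c0 * norm1 (xcur - xκcur) / Real.sqrt κ + 2 * c1 * σt + tail) := by
  have hx0_eq : x0 = shiftPad τ xsprev := funext hx0
  have hdecomp :
      x0 - xscur = shiftPad τ (xsprev - xprev) + (xcur - xscur) - tailPart τ xcur := by
    rw [shiftPad_sub]
    linear_combination hx0_eq - eq_shiftPad_add_tailPart τ hoverlap
  have hmain : norm2 (x0 - xscur) ≤ norm2 (xsprev - xprev) + norm2 (xscur - xcur) + tail := by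
    rw [hdecomp, htail, ← norm2_tailPart, norm2_sub_comm xscur]
    refine (norm2_add_sub_le _ _ _).trans ?_
    gcongr
    exact norm2_shiftPad_le τ _
  exact ⟨hmain, fun c0 c1 σt κ _ _ hprev hcur => by linarith⟩

/-- **Warm-start distance bound.**  If consecutive windows overlap with step `τ`
(`x⁽ⁱ⁾_j = x⁽ⁱ⁻¹⁾_{j+τ}` for `j ≤ n−1−τ`) and the warm start `x̂₀` is the shifted
previous optimum padded with zeros, then
`‖x̂₀ − x⋆⁽ⁱ⁾‖₂ ≤ ‖x⋆⁽ⁱ⁻¹⁾ − x⁽ⁱ⁻¹⁾‖₂ + ‖x⋆⁽ⁱ⁾ − x⁽ⁱ⁾‖₂ + ‖(x⁽ⁱ⁾_{n−τ},…,x⁽ⁱ⁾_{n−1})‖₂`;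
consequently, if each optimization error obeys the LASSO bound
`‖x⋆⁽ʲ⁾ − x⁽ʲ⁾‖₂ ≤ c₀‖x⁽ʲ⁾ − x⁽ʲ⁾_κ‖₁/√κ + c₁σ̃`, the warm-start distance is bounded by
`c₀‖x⁽ⁱ⁻¹⁾ − x⁽ⁱ⁻¹⁾_κ‖₁/√κ + c₀‖x⁽ⁱ⁾ − x⁽ⁱ⁾_κ‖₁/√κ + 2c₁σ̃ + ‖(x⁽ⁱ⁾_{n−τ},…)‖₂`. -/
theorem warm_start_distance_bound
    {n : ℕ} (τ : ℕ) (hτ1 : 1 ≤ τ) (hτn : τ ≤ n)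
    (xprev xcur : Fin n → ℝ)
    (hoverlap : ∀ j : Fin n, ∀ h : (j : ℕ) + τ < n, xcur j = xprev ⟨(j : ℕ) + τ, h⟩)
    (xsprev xscur : Fin n → ℝ)
    (x0 : Fin n → ℝ)
    (hx0 : ∀ j : Fin n,
      x0 j = if h : (j : ℕ) + τ < n then xsprev ⟨(j : ℕ) + τ, h⟩ else 0)
    (tail : ℝ)
    (htail : tail =
      Real.sqrt (∑ j ∈ Finset.univ.filter fun j : Fin n => n - τ ≤ (j : ℕ), (xcur j) ^ 2)) :
    norm2 (x0 - xscur) ≤ norm2 (xsprev - xprev) + norm2 (xscur - xcur) + tail ∧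
    (∀ (c0 c1 σt : ℝ) (κ : ℕ) (xκprev xκcur : Fin n → ℝ),
      norm2 (xsprev - xprev) ≤ c0 * norm1 (xprev - xκprev) / Real.sqrt κ + c1 * σt →
      norm2 (xscur - xcur) ≤ c0 * norm1 (xcur - xκcur) / Real.sqrt κ + c1 * σt →
      norm2 (x0 - xscur) ≤
        c0 * norm1 (xprev - xκprev) / Real.sqrt κ +
          c0 * norm1 (xcur - xκcur) / Real.sqrt κ + 2 * c1 * σt + tail) :=
  warm_start_distance_bound_general τ xprev xcur hoverlap xsprev xscur x0 hx0 tail htail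
end

section
/- (Expected model-mismatch error for the i.i.d. sparse stream model.) Let n ≥ 1, 0 ≤ κ ≤ n, p ∈ (0,1], A > 0, and let X be a random vector in ℝ^n whose entries are i.i.d., each equal to 0 with probability 1−p and, with probability p, uniformly distributed on [−A, A]. Let X_κ denote the vector obtained from X by keeping the κ entries of largest absolute value and setting the rest to 0 (ties occur with probability zero). Then E[ ‖X − X_κ‖₁ ] = A · Σ_{k=κ+1}^{n} C(n,k) p^k (1−p)^{n−k} · Σ_{i=κ+1}^{k} (1 − i/(k+1)). -/
/-!
Let `N_t = #{j | t < |X_j|}`. Whatever set `T` of `κ` largest entries is kept, each level `t > 0`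
is exceeded by exactly `(N_t - κ)⁺` discarded entries, so the layer-cake formula gives
`‖X - X_κ‖₁ = ∫₀^∞ (N_t - κ)⁺ dt`. By Tonelli and independence, `N_t` is binomial with parameter
`q(t) = p (A - t)⁺ / A`, hence `E (N_t - κ)⁺ = φ(q(t))` with
`φ(x) = ∑_k (k - κ)⁺ C(n,k) xᵏ (1 - x)ⁿ⁻ᵏ`. The substitution `x = q(t)` turns `∫₀^A φ(q(t)) dt` into
`(A/p) ∫₀^p φ`, and `φ` has the explicit primitive `∑_k C(n,k) S_k xᵏ⁺¹ (1 - x)ⁿ⁻ᵏ`, where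
`S_k = ∑_{i=κ+1}^k (1 - i/(k+1))`: its derivative telescopes because
`(k+2) S_{k+1} - (k+1) S_k = (k+1-κ)⁺` and `C(n,k) (n-k) = C(n,k+1) (k+1)`.
-/

open Finset MeasureTheory ProbabilityTheory
open scoped ENNReal

noncomputable def tailMean (κ k : ℕ) : ℝ := ∑ i ∈ Icc (κ + 1) k, (1 - (i : ℝ) / (k + 1))

lemma mul_tailMean (κ k : ℕ) :
    ((k : ℝ) + 1) * tailMean κ k = ∑ i ∈ Icc (κ + 1) k, ((k : ℝ) + 1 - i) := by
  rw [tailMean, mul_sum]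
  exact sum_congr rfl fun i _ => by field_simp

lemma succ_mul_tailMean_succ_sub (κ k : ℕ) :
    (((k + 1 : ℕ) : ℝ) + 1) * tailMean κ (k + 1) - ((k : ℝ) + 1) * tailMean κ k
      = (k + 1 - κ : ℕ) := by
  have htop : ∑ i ∈ Icc (κ + 1) k, ((k : ℝ) + 1 - i)
      = ∑ i ∈ Icc (κ + 1) (k + 1), ((k : ℝ) + 1 - i) :=
    sum_subset (Icc_subset_Icc_right k.le_succ) fun i hi hik => by
      obtain rfl : i = k + 1 := by rw [mem_Icc] at hi hik; omega
      push_cast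
      ring
  have hshift : ∀ i : ℕ, ((k + 1 : ℕ) : ℝ) + 1 - i = ((k : ℝ) + 1 - i) + 1 := fun i => by
    push_cast
    ring
  simp_rw [mul_tailMean, hshift, sum_add_distrib, htop, sum_const, Nat.card_Icc,
    Nat.add_sub_add_right, nsmul_one]
  ring

lemma tailMean_of_le {κ k : ℕ} (h : k ≤ κ) : tailMean κ k = 0 := by
  simp [tailMean, Icc_eq_empty_of_lt (Nat.lt_succ_of_le h)]

lemma tailMean_nonneg (κ k : ℕ) : 0 ≤ tailMean κ k :=
  sum_nonneg fun i hi => sub_nonneg.2 <| div_le_one_of_le₀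
    (by have := (mem_Icc.1 hi).2; norm_cast; omega) (by positivity)

lemma sum_range_mul_sub_mul_succ {R : Type*} [CommRing R] (n : ℕ) (a b d f : ℕ → R)
    (h0 : a 0 = d 0) (hn : b n = 0) (h : ∀ k < n, a (k + 1) - b k = d (k + 1)) :
    ∑ k ∈ range (n + 1), (a k * f k - b k * f (k + 1)) = ∑ k ∈ range (n + 1), d k * f k := by
  rw [sum_sub_distrib, sum_range_succ', sum_range_succ _ n, sum_range_succ' _ n, hn, h0]
  have hstep : ∀ k ∈ range n, a (k + 1) * f (k + 1) - b k * f (k + 1) = d (k + 1) * f (k + 1) :=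
    fun k hk => by rw [← sub_mul, h k (mem_range.1 hk)]
  rw [← sum_congr rfl hstep, sum_sub_distrib]
  ring

lemma hasDerivAt_pow_succ_mul_one_sub_pow (k m : ℕ) (x : ℝ) :
    HasDerivAt (fun x : ℝ => x ^ (k + 1) * (1 - x) ^ m)
      ((k + 1) * x ^ k * (1 - x) ^ m - m * x ^ (k + 1) * (1 - x) ^ (m - 1)) x := by
  refine ((hasDerivAt_pow (k + 1) x).mul (((hasDerivAt_id x).const_sub 1).pow m)).congr_deriv ?_
  simp only [Pi.pow_apply, id, Nat.add_sub_cancel]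
  push_cast
  ring

-- `E (N - κ)⁺` for `N ∼ Bin(n, x)`; the truncated `k - κ : ℕ` is the positive part.
noncomputable def binomialExcess (n κ : ℕ) (x : ℝ) : ℝ :=
  ∑ k ∈ range (n + 1), ((k - κ : ℕ) : ℝ) * n.choose k * x ^ k * (1 - x) ^ (n - k)

noncomputable def binomialExcessPrimitive (n κ : ℕ) (x : ℝ) : ℝ :=
  ∑ k ∈ range (n + 1), n.choose k * tailMean κ k * x ^ (k + 1) * (1 - x) ^ (n - k)

lemma choose_mul_tailMean_succ_sub (n κ k : ℕ) :
    n.choose (k + 1) * tailMean κ (k + 1) * (((k + 1 : ℕ) : ℝ) + 1)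
        - n.choose k * tailMean κ k * (n - k : ℕ)
      = ((k + 1 - κ : ℕ) : ℝ) * n.choose (k + 1) := by
  have hchoose : (n.choose k : ℝ) * (n - k : ℕ) = n.choose (k + 1) * ((k : ℝ) + 1) := by
    exact_mod_cast (Nat.choose_succ_right_eq n k).symm
  rw [← succ_mul_tailMean_succ_sub]
  linear_combination (-tailMean κ k) * hchoose

lemma hasDerivAt_binomialExcessPrimitive (n κ : ℕ) (x : ℝ) :
    HasDerivAt (binomialExcessPrimitive n κ) (binomialExcess n κ x) x := by
  have hsum := HasDerivAt.fun_sum (u := range (n + 1)) fun k _ =>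
    (hasDerivAt_pow_succ_mul_one_sub_pow k (n - k) x).const_mul (n.choose k * tailMean κ k : ℝ)
  have hF : binomialExcessPrimitive n κ = fun y => ∑ k ∈ range (n + 1),
      n.choose k * tailMean κ k * (y ^ (k + 1) * (1 - y) ^ (n - k)) := by
    ext y
    exact sum_congr rfl fun k _ => by ring
  rw [hF]
  refine hsum.congr_deriv ((sum_congr rfl fun k _ => ?_).trans ((sum_range_mul_sub_mul_succ n
    (fun k => n.choose k * tailMean κ k * ((k : ℝ) + 1))
    (fun k => n.choose k * tailMean κ k * (n - k : ℕ)) (fun k => ((k - κ : ℕ) : ℝ) * n.choose k)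
    (fun k => x ^ k * (1 - x) ^ (n - k)) (by simp [tailMean]) (by simp)
    (fun k _ => choose_mul_tailMean_succ_sub n κ k)).trans (sum_congr rfl fun k _ => by ring)))
  simp only [Nat.sub_sub]
  ring

lemma binomialExcess_zero (n κ : ℕ) : binomialExcess n κ 0 = 0 := by
  simp [binomialExcess, sum_range_succ']

lemma binomialExcess_nonneg (n κ : ℕ) {x : ℝ} (h0 : 0 ≤ x) (h1 : x ≤ 1) :
    0 ≤ binomialExcess n κ x :=
  sum_nonneg fun k _ => by
    have := sub_nonneg.2 h1
    positivity

lemma continuous_binomialExcess (n κ : ℕ) : Continuous (binomialExcess n κ) := by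
  unfold binomialExcess
  fun_prop

lemma integral_binomialExcess (n κ : ℕ) (p : ℝ) :
    ∫ x in 0..p, binomialExcess n κ x = binomialExcessPrimitive n κ p := by
  rw [intervalIntegral.integral_eq_sub_of_hasDerivAt
    (fun x _ => hasDerivAt_binomialExcessPrimitive n κ x)
    ((continuous_binomialExcess n κ).intervalIntegrable 0 p)]
  simp [binomialExcessPrimitive]

lemma integral_binomialExcess_comp (n κ : ℕ) {p A : ℝ} (hp : p ≠ 0) (hA : A ≠ 0) :
    ∫ t in 0..A, binomialExcess n κ (p * (A - t) / A) = A / p * binomialExcessPrimitive n κ p := by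
  have h := intervalIntegral.integral_comp_sub_mul (binomialExcess n κ) (a := 0) (b := A)
    (div_ne_zero hp hA) p
  simp only [mul_zero, sub_zero, div_mul_cancel₀ p hA, sub_self, integral_binomialExcess,
    smul_eq_mul, inv_div] at h
  rw [← h]
  congr 1
  ext t
  congr 1
  field_simp

lemma binomialExcessPrimitive_eq_mul_sum_Icc (n κ : ℕ) (x : ℝ) :
    binomialExcessPrimitive n κ x
      = x * ∑ k ∈ Icc (κ + 1) n, n.choose k * x ^ k * (1 - x) ^ (n - k) * tailMean κ k := by
  rw [binomialExcessPrimitive, mul_sum,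
    ← sum_subset fun k hk => mem_range.2 (Nat.lt_succ_of_le (mem_Icc.1 hk).2)]
  · exact sum_congr rfl fun k _ => by ring
  · intro k hkn hk
    rw [tailMean_of_le (by rw [mem_range] at hkn; rw [mem_Icc] at hk; omega)]
    ring

lemma binomialExcessPrimitive_nonneg (n κ : ℕ) {x : ℝ} (h0 : 0 ≤ x) (h1 : x ≤ 1) :
    0 ≤ binomialExcessPrimitive n κ x :=
  sum_nonneg fun k _ => mul_nonneg (mul_nonneg (mul_nonneg (Nat.cast_nonneg _)
    (tailMean_nonneg κ k)) (pow_nonneg h0 _)) (pow_nonneg (sub_nonneg.2 h1) _)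

lemma lintegral_ofReal_binomialExcess_comp (n κ : ℕ) {p A : ℝ} (hp0 : 0 < p) (hp1 : p ≤ 1)
    (hA : 0 < A) :
    ∫⁻ t in Set.Ioi 0, ENNReal.ofReal (binomialExcess n κ (p * max (A - t) 0 / A))
      = ENNReal.ofReal (A / p * binomialExcessPrimitive n κ p) := by
  rw [← Set.Ioc_union_Ioi_eq_Ioi hA.le, lintegral_union measurableSet_Ioi Set.Ioc_disjoint_Ioi_same]
  have htail : ∫⁻ t in Set.Ioi A, ENNReal.ofReal (binomialExcess n κ (p * max (A - t) 0 / A)) = 0 :=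
    setLIntegral_eq_zero measurableSet_Ioi fun t (ht : A < t) => by
      simp [max_eq_right (sub_nonpos.2 ht.le), binomialExcess_zero]
  have hbody : ∀ t ∈ Set.Ioc 0 A, ENNReal.ofReal (binomialExcess n κ (p * max (A - t) 0 / A))
      = ENNReal.ofReal (binomialExcess n κ (p * (A - t) / A)) := fun t ht => by
    rw [max_eq_left (sub_nonneg.2 ht.2)]
  rw [htail, add_zero, setLIntegral_congr_fun measurableSet_Ioc hbody,
    ← ofReal_integral_eq_lintegral_ofReal, ← intervalIntegral.integral_of_le hA.le,
    integral_binomialExcess_comp n κ hp0.ne' hA.ne']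
  · exact ((continuous_binomialExcess n κ).comp (by fun_prop)).integrableOn_Ioc
  · refine (ae_restrict_iff' measurableSet_Ioc).2 (ae_of_all _ fun t ⟨ht0, htA⟩ => ?_)
    refine binomialExcess_nonneg n κ (by have := sub_nonneg.2 htA; positivity) ?_
    rw [div_le_one hA]
    nlinarith

lemma ofReal_binomialExcess (n κ : ℕ) {x : ℝ} (h0 : 0 ≤ x) (h1 : x ≤ 1) :
    ENNReal.ofReal (binomialExcess n κ x) = ∑ k ∈ range (n + 1), ((k - κ : ℕ) : ℝ≥0∞) *
      n.choose k * ENNReal.ofReal x ^ k * (1 - ENNReal.ofReal x) ^ (n - k) := by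
  have h1' : 0 ≤ 1 - x := sub_nonneg.2 h1
  rw [binomialExcess, ENNReal.ofReal_sum_of_nonneg fun k _ => by positivity]
  refine sum_congr rfl fun k _ => ?_
  rw [ENNReal.ofReal_mul (by positivity), ENNReal.ofReal_mul (by positivity),
    ENNReal.ofReal_mul (by positivity), ENNReal.ofReal_pow h0, ENNReal.ofReal_pow h1',
    ENNReal.ofReal_sub _ h0, ENNReal.ofReal_one, ENNReal.ofReal_natCast, ENNReal.ofReal_natCast]

noncomputable def sparseUniform (p A : ℝ) : Measure ℝ :=
  ENNReal.ofReal (1 - p) • Measure.dirac 0 +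
    ENNReal.ofReal (p / (2 * A)) • volume.restrict (Set.Icc (-A) A)

lemma sparseUniform_setOf_lt_abs {p A t : ℝ} (hA : A ≠ 0) (ht : 0 ≤ t) :
    sparseUniform p A {x | t < |x|} = ENNReal.ofReal (p * max (A - t) 0 / A) := by
  have hs : MeasurableSet {x : ℝ | t < |x|} := measurableSet_lt measurable_const measurable_abs
  have h0 : (0 : ℝ) ∉ {x : ℝ | t < |x|} := by simpa using ht
  have hset : {x : ℝ | t < |x|} ∩ Set.Icc (-A) A = Set.Ico (-A) (-t) ∪ Set.Ioc t A := by
    ext x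
    simp only [Set.mem_inter_iff, Set.mem_ofPred_eq, Set.mem_Icc, Set.mem_union, Set.mem_Ico,
      Set.mem_Ioc, lt_abs]
    constructor
    · rintro ⟨hx | hx, hxA, hxA'⟩ <;> [right; left] <;> constructor <;> linarith
    · rintro (⟨hx, hx'⟩ | ⟨hx, hx'⟩)
      exacts [⟨Or.inr (by linarith), hx, by linarith⟩, ⟨Or.inl hx, by linarith, hx'⟩]
  have hlen : ENNReal.ofReal (-t - -A) + ENNReal.ofReal (A - t)
      = ENNReal.ofReal (2 * max (A - t) 0) := by
    rw [ENNReal.ofReal_mul zero_le_two, ENNReal.ofReal_max, ENNReal.ofReal_zero,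
      max_eq_left zero_le, show -t - -A = A - t by ring, ENNReal.ofReal_ofNat, two_mul]
  rw [sparseUniform, Measure.add_apply, Measure.smul_apply, Measure.smul_apply,
    Measure.dirac_apply' _ hs, Set.indicator_of_notMem h0, smul_zero, zero_add,
    Measure.restrict_apply hs, hset,
    measure_union (Set.disjoint_left.2 fun x hx hx' => by linarith [hx.2, hx'.1]) measurableSet_Ioc,
    Real.volume_Ico, Real.volume_Ioc, hlen, smul_eq_mul, ← ENNReal.ofReal_mul' (by positivity)]
  congr 1
  field_simp

def IsBestTermApprox {ι : Type*} [DecidableEq ι] (κ : ℕ) (x y : ι → ℝ) : Prop :=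
  ∃ T : Finset ι, #T = κ ∧ (∀ j, y j = if j ∈ T then x j else 0) ∧ ∀ i ∈ T, ∀ j ∉ T, |x j| ≤ |x i|

lemma lintegral_Ioi_ite_lt (b : ℝ) :
    ∫⁻ t in Set.Ioi 0, (if t < b then 1 else 0 : ℝ≥0∞) = ENNReal.ofReal b := by
  have : (fun t => (if t < b then 1 else 0 : ℝ≥0∞)) = (Set.Iio b).indicator 1 := by
    ext t
    simp [Set.indicator_apply]
  rw [this, lintegral_indicator_one measurableSet_Iio, Measure.restrict_apply measurableSet_Iio,
    Set.Iio_inter_Ioi, Real.volume_Ioo, sub_zero]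

section BestTermApprox

variable {ι : Type*} [Fintype ι] [DecidableEq ι] {κ : ℕ}

lemma card_filter_compl_lt {b : ι → ℝ} {T : Finset ι} (hdom : ∀ i ∈ T, ∀ j ∉ T, b j ≤ b i)
    (t : ℝ) : #{j ∈ Tᶜ | t < b j} = #{j | t < b j} - #T := by
  have hsplit : #{j | t < b j} = #{j ∈ T | t < b j} + #{j ∈ Tᶜ | t < b j} := by
    rw [← card_union_of_disjoint (disjoint_filter_filter disjoint_compl_right), ← filter_union,
      union_compl]
  by_cases h : ∃ j ∉ T, t < b j
  · obtain ⟨j, hjT, hj⟩ := h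
    rw [hsplit, filter_true_of_mem fun i hi => hj.trans_le (hdom i hi j hjT)]
    omega
  · push Not at h
    rw [hsplit, filter_false_of_mem fun j hj => (h j (mem_compl.1 hj)).not_gt, card_empty]
    have := card_filter_le T fun j => t < b j
    omega

lemma sum_compl_ofReal_eq_lintegral {b : ι → ℝ} {T : Finset ι}
    (hdom : ∀ i ∈ T, ∀ j ∉ T, b j ≤ b i) :
    ∑ j ∈ Tᶜ, ENNReal.ofReal (b j) = ∫⁻ t in Set.Ioi 0, ((#{j | t < b j} - #T : ℕ) : ℝ≥0∞) := by
  simp_rw [← card_filter_compl_lt hdom, card_filter, Nat.cast_sum, Nat.cast_ite, Nat.cast_one,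
    Nat.cast_zero]
  rw [lintegral_finsetSum _ fun j _ =>
    Measurable.ite measurableSet_Iio measurable_const measurable_const]
  simp_rw [lintegral_Ioi_ite_lt]

lemma IsBestTermApprox.ofReal_sum_abs_sub {x y : ι → ℝ} (h : IsBestTermApprox κ x y) :
    ENNReal.ofReal (∑ j, |x j - y j|)
      = ∫⁻ t in Set.Ioi 0, ((#{j | t < |x j|} - κ : ℕ) : ℝ≥0∞) := by
  obtain ⟨T, rfl, hy, hdom⟩ := h
  have hT : ∑ j ∈ T, |x j - y j| = 0 := sum_eq_zero fun j hj => by simp [hy j, hj]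
  have hTc : ∑ j ∈ Tᶜ, |x j - y j| = ∑ j ∈ Tᶜ, |x j| :=
    sum_congr rfl fun j hj => by simp [hy j, mem_compl.1 hj]
  rw [← sum_add_sum_compl T, hT, zero_add, hTc,
    ENNReal.ofReal_sum_of_nonneg fun j _ => abs_nonneg _, sum_compl_ofReal_eq_lintegral hdom]

lemma integral_sum_abs_sub_eq {Ω : Type*} [MeasurableSpace Ω] {μ : Measure Ω} [SFinite μ]
    {X Y : Ω → ι → ℝ} (hX : ∀ j, Measurable fun ω => X ω j)
    (h : ∀ᵐ ω ∂μ, IsBestTermApprox κ (X ω) (Y ω)) :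
    ∫ ω, ∑ j, |X ω j - Y ω j| ∂μ
      = (∫⁻ t in Set.Ioi 0, ∫⁻ ω, ((#{j | t < |X ω j|} - κ : ℕ) : ℝ≥0∞) ∂μ).toReal := by
  let F : Ω → ℝ → ℝ≥0∞ := fun ω t => ((#{j | t < |X ω j|} - κ : ℕ) : ℝ≥0∞)
  have hF : Measurable (Function.uncurry F) := by
    refine Measurable.comp (g := fun m : ℕ => ((m - κ : ℕ) : ℝ≥0∞))
      (f := fun z : Ω × ℝ => #{j | z.2 < |X z.1 j|}) measurable_from_top ?_
    simp_rw [card_filter]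
    exact Finset.measurable_sum _ fun j _ => Measurable.ite
      (measurableSet_lt measurable_snd ((hX j).comp measurable_fst).abs) measurable_const
      measurable_const
  have hae : ∀ᵐ ω ∂μ, ∑ j, |X ω j - Y ω j| = (∫⁻ t in Set.Ioi 0, F ω t).toReal :=
    h.mono fun ω hω => by
      rw [← hω.ofReal_sum_abs_sub, ENNReal.toReal_ofReal (sum_nonneg fun j _ => abs_nonneg _)]
  rw [integral_congr_ae hae, integral_toReal (f := fun ω => ∫⁻ t in Set.Ioi 0, F ω t)
    hF.lintegral_prod_right'.aemeasurable
    (h.mono fun ω hω => by rw [← hω.ofReal_sum_abs_sub]; exact ENNReal.ofReal_lt_top),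
    lintegral_lintegral_swap hF.aemeasurable]

end BestTermApprox

lemma measurableSet_ite_mem_compl {α ι : Type*} [MeasurableSpace α] [DecidableEq ι] {E : Set α}
    (hE : MeasurableSet E) (S : Finset ι) (i : ι) : MeasurableSet (if i ∈ S then E else Eᶜ) := by
  split_ifs
  exacts [hE, hE.compl]

section IndependentCount

variable {Ω α ι : Type*} [MeasurableSpace Ω] [MeasurableSpace α] [Fintype ι] [DecidableEq ι]
  {μ : Measure Ω} [IsProbabilityMeasure μ] {Y : ι → Ω → α} {E : Set α} [DecidablePred (· ∈ E)]
  {q : ℝ≥0∞}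

omit [MeasurableSpace Ω] [MeasurableSpace α] in
lemma setOf_filter_mem_eq (S : Finset ι) :
    {ω | ({i | Y i ω ∈ E} : Finset ι) = S}
      = ⋂ i ∈ (univ : Finset ι), Y i ⁻¹' (if i ∈ S then E else Eᶜ) := by
  ext ω
  simp only [Set.mem_ofPred_eq, Finset.ext_iff, mem_filter, mem_univ, true_and, Set.mem_iInter,
    Set.mem_preimage, forall_const]
  refine forall_congr' fun i => ?_
  by_cases hi : i ∈ S <;> simp [hi]

lemma measurableSet_setOf_filter_mem_eq (hY : ∀ i, Measurable (Y i)) (hE : MeasurableSet E)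
    (S : Finset ι) : MeasurableSet {ω | ({i | Y i ω ∈ E} : Finset ι) = S} := by
  rw [setOf_filter_mem_eq]
  exact Finset.measurableSet_biInter _ fun i _ => hY i (measurableSet_ite_mem_compl hE S i)

lemma ProbabilityTheory.iIndepFun.measure_filter_mem_eq (hind : iIndepFun Y μ)
    (hY : ∀ i, Measurable (Y i)) (hE : MeasurableSet E) (hq : ∀ i, μ (Y i ⁻¹' E) = q)
    (S : Finset ι) :
    μ {ω | ({i | Y i ω ∈ E} : Finset ι) = S} = q ^ #S * (1 - q) ^ (Fintype.card ι - #S) := by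
  have hμ : ∀ i, μ (Y i ⁻¹' if i ∈ S then E else Eᶜ) = if i ∈ S then q else 1 - q := fun i => by
    split_ifs
    · exact hq i
    · rw [Set.preimage_compl, prob_compl_eq_one_sub ((hY i) hE), hq]
  rw [setOf_filter_mem_eq,
    hind.measure_inter_preimage_eq_mul _ fun i _ => measurableSet_ite_mem_compl hE S i]
  simp_rw [hμ]
  rw [prod_ite, prod_const, prod_const]
  simp [filter_not, card_univ_sdiff]

lemma ProbabilityTheory.iIndepFun.lintegral_comp_card_filter_mem (hind : iIndepFun Y μ)
    (hY : ∀ i, Measurable (Y i)) (hE : MeasurableSet E) (hq : ∀ i, μ (Y i ⁻¹' E) = q)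
    (g : ℕ → ℝ≥0∞) :
    ∫⁻ ω, g #{i | Y i ω ∈ E} ∂μ = ∑ k ∈ range (Fintype.card ι + 1),
      g k * (Fintype.card ι).choose k * q ^ k * (1 - q) ^ (Fintype.card ι - k) := by
  have hdecomp : ∀ ω, g #{i | Y i ω ∈ E}
      = ∑ S : Finset ι, {ω | ({i | Y i ω ∈ E} : Finset ι) = S}.indicator (fun _ => g #S) ω :=
    fun ω => by simp [Set.indicator_apply, sum_ite_eq]
  simp_rw [hdecomp]
  rw [lintegral_finsetSum _ fun S _ =>
    measurable_const.indicator (measurableSet_setOf_filter_mem_eq hY hE S)]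
  simp_rw [lintegral_indicator_const (measurableSet_setOf_filter_mem_eq hY hE _),
    hind.measure_filter_mem_eq hY hE hq, ← powerset_univ]
  rw [sum_powerset_apply_card (fun k => g k * (q ^ k * (1 - q) ^ (Fintype.card ι - k))), card_univ]
  exact sum_congr rfl fun k _ => by rw [nsmul_eq_mul]; ring

end IndependentCount

theorem expected_model_mismatch_error_general
    {n : ℕ} (κ : ℕ)
    (p : ℝ) (hp0 : 0 < p) (hp1 : p ≤ 1) (A : ℝ) (hA : 0 < A)
    {Ω : Type*} [MeasurableSpace Ω] (μ : Measure Ω) [IsProbabilityMeasure μ]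
    (X : Ω → Fin n → ℝ)
    (hmeas : ∀ j : Fin n, Measurable fun ω => X ω j)
    (ν : Measure ℝ)
    (hν : ν = ENNReal.ofReal (1 - p) • Measure.dirac (0 : ℝ) +
      ENNReal.ofReal (p / (2 * A)) • volume.restrict (Set.Icc (-A) A))
    (hdist : ∀ j : Fin n, Measure.map (fun ω => X ω j) μ = ν)
    (hindep : iIndepFun (fun j ω => X ω j) μ)
    (Xκ : Ω → Fin n → ℝ)
    (hXκ : ∀ᵐ ω ∂μ, ∃ T : Finset (Fin n), T.card = κ ∧
      (∀ j, Xκ ω j = if j ∈ T then X ω j else 0) ∧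
      (∀ i ∈ T, ∀ j ∉ T, |X ω j| ≤ |X ω i|)) :
    ∫ ω, ∑ j, |X ω j - Xκ ω j| ∂μ =
      A * ∑ k ∈ Finset.Icc (κ + 1) n,
        (n.choose k : ℝ) * p ^ k * (1 - p) ^ (n - k) *
          ∑ i ∈ Finset.Icc (κ + 1) k, (1 - (i : ℝ) / ((k : ℝ) + 1)) := by
  have hcount : ∀ t ∈ Set.Ioi (0 : ℝ), ∫⁻ ω, ((#{j | t < |X ω j|} - κ : ℕ) : ℝ≥0∞) ∂μ
      = ENNReal.ofReal (binomialExcess n κ (p * max (A - t) 0 / A)) := fun t ht => by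
    have hE : MeasurableSet {x : ℝ | t < |x|} := measurableSet_lt measurable_const measurable_abs
    have hq : ∀ j, μ ((fun ω => X ω j) ⁻¹' {x | t < |x|})
        = ENNReal.ofReal (p * max (A - t) 0 / A) := fun j => by
      rw [← Measure.map_apply (hmeas j) hE, hdist j, hν]
      exact sparseUniform_setOf_lt_abs hA.ne' (le_of_lt ht)
    have hq1 : p * max (A - t) 0 / A ≤ 1 := by
      rw [div_le_one hA]
      nlinarith [max_le (sub_le_self A (le_of_lt ht)) hA.le]
    have hbinom := hindep.lintegral_comp_card_filter_mem hmeas hE hq fun m => ((m - κ : ℕ) : ℝ≥0∞)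
    rw [Fintype.card_fin] at hbinom
    rw [ofReal_binomialExcess n κ (by positivity) hq1]
    exact hbinom
  rw [integral_sum_abs_sub_eq hmeas hXκ, setLIntegral_congr_fun measurableSet_Ioi hcount,
    lintegral_ofReal_binomialExcess_comp n κ hp0 hp1 hA,
    ENNReal.toReal_ofReal
      (mul_nonneg (by positivity) (binomialExcessPrimitive_nonneg n κ hp0.le hp1)),
    binomialExcessPrimitive_eq_mul_sum_Icc, ← mul_assoc, div_mul_cancel₀ A hp0.ne']
  rfl

/-- **Expected model-mismatch error for the i.i.d. sparse stream model.**
The entries of `X ∈ ℝⁿ` are i.i.d., each `0` with probability `1−p` and otherwise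
uniform on `[−A,A]`; `Xκ` keeps the `κ` largest-magnitude entries of `X` (a.s. well
defined) and zeroes the rest.  Then
`E‖X − Xκ‖₁ = A·Σ_{k=κ+1}^n C(n,k) pᵏ(1−p)^{n−k} Σ_{i=κ+1}^k (1 − i/(k+1))`. -/
theorem expected_model_mismatch_error
    {n : ℕ} (hn : 1 ≤ n) (κ : ℕ) (hκ : κ ≤ n)
    (p : ℝ) (hp0 : 0 < p) (hp1 : p ≤ 1) (A : ℝ) (hA : 0 < A)
    {Ω : Type*} [MeasurableSpace Ω] (μ : Measure Ω) [IsProbabilityMeasure μ]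
    (X : Ω → Fin n → ℝ)
    (hmeas : ∀ j : Fin n, Measurable fun ω => X ω j)
    (ν : Measure ℝ)
    (hν : ν = ENNReal.ofReal (1 - p) • Measure.dirac (0 : ℝ) +
      ENNReal.ofReal (p / (2 * A)) • volume.restrict (Set.Icc (-A) A))
    (hdist : ∀ j : Fin n, Measure.map (fun ω => X ω j) μ = ν)
    (hindep : iIndepFun (fun j ω => X ω j) μ)
    (Xκ : Ω → Fin n → ℝ)
    (hXκ : ∀ᵐ ω ∂μ, ∃ T : Finset (Fin n), T.card = κ ∧
      (∀ j, Xκ ω j = if j ∈ T then X ω j else 0) ∧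
      (∀ i ∈ T, ∀ j ∉ T, |X ω j| ≤ |X ω i|)) :
    ∫ ω, ∑ j, |X ω j - Xκ ω j| ∂μ =
      A * ∑ k ∈ Finset.Icc (κ + 1) n,
        (n.choose k : ℝ) * p ^ k * (1 - p) ^ (n - k) *
          ∑ i ∈ Finset.Icc (κ + 1) k, (1 - (i : ℝ) / ((k : ℝ) + 1)) :=
  expected_model_mismatch_error_general κ p hp0 hp1 A hA μ X hmeas ν hν hdist hindep Xκ hXκ
end
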